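/- arXiv:2004.14199 — 3 statements merged into one kernel-verified Lean document; each statement's English description precedes it below -/
import Mathlib

section
/- The objective function of the regularized maximum-likelihood problem is strictly convex: for any fixed nonnegative symmetric weight matrices Λ ∈ ℝ^{m₁×m₁} and Γ ∈ ℝ^{m₂×m₂}, the function S ↦ ℓ(y^N; S) + g(S; Λ, Γ) is strictly convex on the convex set Q⁺ of parameters S = (S₀,...,Sₙ) for which Σ_S(θ) is positive definite for every θ ∈ [−π, π]. -/
/-!
Only the log-determinant term is responsible for strictness: the trace term is linear in `S`,
and the penalty is a nonnegative combination of maxima of absolute values of entries, hence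
convex. For positive definite `A ≠ B`, simultaneous diagonalisation `A = Cᴴ C`,
`B = Cᴴ diag(μ) C` turns `log det` on the segment from `A` to `B` into
`log |det C|² + ∑ᵢ log (a + b μᵢ)`, which is strictly concave because some `μᵢ ≠ 1`.
Since `S ↦ Σ_S(θ)` is linear, the integrand of `ℓ` is convex in `S` for each `θ`; and if `S ≠ T`
then `Σ_S(θ) ≠ Σ_T(θ)` for some `θ`, because the entries of `Σ_S` are trigonometric polynomials
whose Fourier coefficients are the entries of the `Sₜ`. The integrands are continuous, so the
strict inequality at that `θ` survives integration.
-/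

open MeasureTheory Matrix Finset
open scoped ComplexOrder

noncomputable section

namespace KroneckerGM

/-- Row/column indices of `m₁m₂ × m₁m₂` matrices, as pairs `(h,k)` (row `(h-1)m₂+k`). -/
abbrev Idx (m₁ m₂ : ℕ) := Fin m₁ × Fin m₂

/-- A real `m₁m₂ × m₁m₂` matrix, indexed by pairs. -/
abbrev Mat (m₁ m₂ : ℕ) := Matrix (Idx m₁ m₂) (Idx m₁ m₂) ℝ

/-- A parameter is a tuple `S = (S₀, ..., Sₙ)` of real `m × m` matrices. -/
abbrev Param (m₁ m₂ n : ℕ) := Fin (n + 1) → Mat m₁ m₂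

/-- The Hermitian matrix function
`Σ_S(θ) = S₀ + (1/2) ∑_{t=1}^n (Sₜ e^{-itθ} + Sₜᵀ e^{itθ})`. -/
def sigmaMat {m₁ m₂ n : ℕ} (S : Param m₁ m₂ n) (θ : ℝ) :
    Matrix (Idx m₁ m₂) (Idx m₁ m₂) ℂ :=
  (S 0).map (fun a => (a : ℂ)) +
    (1 / 2 : ℂ) • ∑ t ∈ Finset.Ioi (0 : Fin (n + 1)),
      (Complex.exp (-(((t : ℕ) : ℂ) * θ) * Complex.I) • (S t).map (fun a => (a : ℂ)) +
        Complex.exp ((((t : ℕ) : ℂ) * θ) * Complex.I) • ((S t)ᵀ).map (fun a => (a : ℂ)))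

/-- The set `Q⁺` of parameters `S` with `S₀` symmetric and `Σ_S(θ)` positive definite
for every `θ ∈ [-π, π]`. -/
def Qplus (m₁ m₂ n : ℕ) : Set (Param m₁ m₂ n) :=
  {S | (S 0)ᵀ = S 0 ∧ ∀ θ ∈ Set.Icc (-Real.pi) Real.pi, (sigmaMat S θ).PosDef}

/-- Sample covariances `R̂_s = (1/(N-n)) ∑_{t=1}^{N-s} y(t) y(t+s)ᵀ`. -/
def Rhat (m₁ m₂ n N : ℕ) (y : ℕ → Idx m₁ m₂ → ℝ) (s : ℕ) : Mat m₁ m₂ :=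
  (1 / ((N : ℝ) - (n : ℝ))) •
    ∑ t ∈ Finset.Icc 1 (N - s), Matrix.vecMulVec (y t) (y (t + s))

/-- The truncated periodogram
`Φ̂_p(θ) = R̂₀ + (1/2) ∑_{s=1}^n (R̂_s e^{-isθ} + R̂_sᵀ e^{isθ})`. -/
def PhiP (m₁ m₂ n N : ℕ) (y : ℕ → Idx m₁ m₂ → ℝ) (θ : ℝ) :
    Matrix (Idx m₁ m₂) (Idx m₁ m₂) ℂ :=
  (Rhat m₁ m₂ n N y 0).map (fun a => (a : ℂ)) +
    (1 / 2 : ℂ) • ∑ s ∈ Finset.Icc 1 n,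
      (Complex.exp (-((s : ℂ) * θ) * Complex.I) • (Rhat m₁ m₂ n N y s).map (fun a => (a : ℂ)) +
        Complex.exp (((s : ℂ) * θ) * Complex.I) • ((Rhat m₁ m₂ n N y s)ᵀ).map (fun a => (a : ℂ)))

/-- Approximate negative log-likelihood
`ℓ(y^N; S) = ((N-n)/(4π)) ∫_{-π}^{π} [-log det Σ_S(θ) + Re tr(Φ̂_p(θ) Σ_S(θ))] dθ`. -/
def ell (m₁ m₂ n N : ℕ) (y : ℕ → Idx m₁ m₂ → ℝ) (S : Param m₁ m₂ n) : ℝ :=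
  (((N : ℝ) - (n : ℝ)) / (4 * Real.pi)) *
    ∫ θ in (-Real.pi)..Real.pi,
      (-Real.log ((sigmaMat S θ).det.re) +
        ((PhiP m₁ m₂ n N y θ) * (sigmaMat S θ)).trace.re)

/-- `q_{hk,jl}(S)`: the maximum of the absolute values of the four groups of entries. -/
def qfun {m₁ m₂ n : ℕ} (S : Param m₁ m₂ n) (h j : Fin m₁) (k l : Fin m₂) : ℝ :=
  max
    (max (Finset.univ.sup' Finset.univ_nonempty fun t : Fin (n + 1) => |S t (h, k) (j, l)|)
      (Finset.univ.sup' Finset.univ_nonempty fun t : Fin (n + 1) => |S t (h, l) (j, k)|))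
    (max (Finset.univ.sup' Finset.univ_nonempty fun t : Fin (n + 1) => |S t (j, l) (h, k)|)
      (Finset.univ.sup' Finset.univ_nonempty fun t : Fin (n + 1) => |S t (j, k) (h, l)|))

/-- The index set `T = {(h,k,j,l) : h ≥ j, k ≥ l}`. -/
def Tset (m₁ m₂ : ℕ) : Finset (Fin m₁ × Fin m₂ × Fin m₁ × Fin m₂) :=
  Finset.univ.filter fun p => p.2.2.1 ≤ p.1 ∧ p.2.2.2 ≤ p.2.1

/-- The max-prior penalty `g(S; Λ, Γ) = ∑_{(h,k,j,l)∈T} max{λ_{hj}, γ_{kl}} q_{hk,jl}(S)`. -/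
def gpen {m₁ m₂ n : ℕ} (Λ : Matrix (Fin m₁) (Fin m₁) ℝ) (Γ : Matrix (Fin m₂) (Fin m₂) ℝ)
    (S : Param m₁ m₂ n) : ℝ :=
  ∑ p ∈ Tset m₁ m₂,
    max (Λ p.1 p.2.2.1) (Γ p.2.1 p.2.2.2) * qfun S p.1 p.2.2.1 p.2.1 p.2.2.2

end KroneckerGM

section ConvexOn

variable {E ι : Type*} [AddCommGroup E] [Module ℝ E] {s : Set E}

lemma ConvexOn.sum {t : Finset ι} {f : ι → E → ℝ} (hs : Convex ℝ s)
    (hf : ∀ i ∈ t, ConvexOn ℝ s (f i)) : ConvexOn ℝ s fun x => ∑ i ∈ t, f i x := by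
  refine ⟨hs, fun x hx y hy a b ha hb hab => ?_⟩
  simp only [smul_eq_mul, mul_sum, ← sum_add_distrib]
  exact sum_le_sum fun i hi => (hf i hi).2 hx hy ha hb hab

lemma ConvexOn.finset_sup' {t : Finset ι} (ht : t.Nonempty) {f : ι → E → ℝ} (hs : Convex ℝ s)
    (hf : ∀ i ∈ t, ConvexOn ℝ s (f i)) : ConvexOn ℝ s fun x => t.sup' ht (f · x) := by
  refine ⟨hs, fun x hx y hy a b ha hb hab => sup'_le _ _ fun i hi => ?_⟩
  calc f i (a • x + b • y) ≤ a • f i x + b • f i y := (hf i hi).2 hx hy ha hb hab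
    _ ≤ a • t.sup' ht (f · x) + b • t.sup' ht (f · y) := by
      gcongr
      · exact le_sup' (f · x) hi
      · exact le_sup' (f · y) hi

lemma StrictConvexOn.const_mul {f : E → ℝ} {c : ℝ} (hc : 0 < c) (hf : StrictConvexOn ℝ s f) :
    StrictConvexOn ℝ s fun x => c * f x := by
  refine ⟨hf.1, fun x hx y hy hxy a b ha hb hab => ?_⟩
  have := mul_lt_mul_of_pos_left (hf.2 hx hy hxy ha hb hab) hc
  simp only [smul_eq_mul] at this ⊢
  linarith

open intervalIntegral in
theorem strictConvexOn_intervalIntegral_comp {V : Type*} [AddCommGroup V] [Module ℝ V]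
    {P : Set V} {G : ℝ → V → ℝ} {L : ℝ → E →ₗ[ℝ] V} {a b : ℝ} (hab : a < b) (hs : Convex ℝ s)
    (hG : ∀ θ ∈ Set.Icc a b, StrictConvexOn ℝ P (G θ))
    (hL : ∀ x ∈ s, ∀ θ ∈ Set.Icc a b, L θ x ∈ P)
    (hsep : ∀ x ∈ s, ∀ y ∈ s, (∀ θ ∈ Set.Icc a b, L θ x = L θ y) → x = y)
    (hcont : ∀ x ∈ s, ContinuousOn (fun θ => G θ (L θ x)) (Set.Icc a b)) :
    StrictConvexOn ℝ s fun x => ∫ θ in a..b, G θ (L θ x) := by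
  refine ⟨hs, fun x hx y hy hxy μ ν hμ hν hμν => ?_⟩
  obtain ⟨θ₀, hθ₀, hne⟩ : ∃ θ ∈ Set.Icc a b, L θ x ≠ L θ y := by
    by_contra! h; exact hxy (hsep x hx y hy h)
  have hint : ∀ z ∈ s, IntervalIntegrable (fun θ => G θ (L θ z)) MeasureTheory.volume a b :=
    fun z hz => (hcont z hz).intervalIntegrable_of_Icc hab.le
  calc ∫ θ in a..b, G θ (L θ (μ • x + ν • y))
      < ∫ θ in a..b, (μ * G θ (L θ x) + ν * G θ (L θ y)) := by
        refine integral_lt_integral_of_continuousOn_of_le_of_exists_lt hab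
          (hcont _ (hs hx hy hμ.le hν.le hμν))
          (((hcont x hx).const_smul μ).add ((hcont y hy).const_smul ν)) (fun θ hθ => ?_)
          ⟨θ₀, hθ₀, ?_⟩
        · have hθ := Set.Ioc_subset_Icc_self hθ
          simpa only [map_add, map_smul, smul_eq_mul] using
            (hG θ hθ).convexOn.2 (hL x hx θ hθ) (hL y hy θ hθ) hμ.le hν.le hμν
        · simpa only [map_add, map_smul, smul_eq_mul] using
            (hG θ₀ hθ₀).2 (hL x hx θ₀ hθ₀) (hL y hy θ₀ hθ₀) hne hμ hν hμν
    _ = μ • (∫ θ in a..b, G θ (L θ x)) + ν • ∫ θ in a..b, G θ (L θ y) := by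
        rw [integral_add ((hint x hx).const_mul μ) ((hint y hy).const_mul ν),
          intervalIntegral.integral_const_mul, intervalIntegral.integral_const_mul, smul_eq_mul,
          smul_eq_mul]

end ConvexOn

lemma strictConcaveOn_sum_log {ι : Type*} [Fintype ι] :
    StrictConcaveOn ℝ (Set.univ.pi fun _ : ι => Set.Ioi 0) (fun x => ∑ i, Real.log (x i)) := by
  refine ⟨convex_pi fun _ _ => convex_Ioi 0, fun x hx y hy hxy a b ha hb hab => ?_⟩
  obtain ⟨i, hi⟩ := Function.ne_iff.mp hxy
  simp only [Set.mem_univ_pi] at hx hy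
  simp only [smul_eq_mul, mul_sum, ← sum_add_distrib, Pi.add_apply, Pi.smul_apply]
  exact sum_lt_sum (fun j _ => strictConcaveOn_log_Ioi.concaveOn.2 (hx j) (hy j) ha.le hb.le hab)
    ⟨i, mem_univ _, strictConcaveOn_log_Ioi.2 (hx i) (hy i) hi ha hb hab⟩

open Complex Real in
lemma integral_cexp_int_mul (k : ℤ) :
    ∫ θ in (-π)..π, cexp (k * θ * I) = if k = 0 then 2 * (π : ℂ) else 0 := by
  split_ifs with hk
  · simp [hk, two_mul]
  · have hc : (k : ℂ) * I ≠ 0 := mul_ne_zero (by exact_mod_cast hk) I_ne_zero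
    simp_rw [mul_right_comm _ _ I]
    rw [integral_exp_mul_complex hc, div_eq_zero_iff, sub_eq_zero, exp_eq_exp_iff_exists_int]
    exact Or.inl ⟨k, by push_cast; ring⟩

namespace Matrix

lemma convex_setOf_posDef {ι : Type*} : Convex ℝ {A : Matrix ι ι ℂ | A.PosDef} := by
  intro A hA B hB a b ha hb hab
  rcases ha.lt_or_eq with ha | rfl
  · exact (hA.smul ha).add_posSemidef (hB.posSemidef.smul hb)
  · simpa [show b = 1 by linarith] using hB

variable {ι : Type*} [Fintype ι] [DecidableEq ι]

open scoped MatrixOrder in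
lemma PosDef.exists_eq_conjTranspose_mul_diagonal_mul {A B : Matrix ι ι ℂ} (hA : A.PosDef)
    (hB : B.PosDef) : ∃ (C : Matrix ι ι ℂ) (μ : ι → ℝ), (∀ i, 0 < μ i) ∧ A = Cᴴ * C ∧
      B = Cᴴ * diagonal (fun i => (μ i : ℂ)) * C := by
  obtain ⟨R, hR, rfl⟩ := CStarAlgebra.isStrictlyPositive_iff_eq_star_mul_self.mp
    hA.isStrictlyPositive
  have hRdet : IsUnit R.det := (isUnit_iff_isUnit_det R).mp hR
  have hM : ((R⁻¹)ᴴ * B * R⁻¹).PosDef := hB.conjTranspose_mul_mul_same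
    (mulVec_injective_iff_isUnit.mpr (by simpa [isUnit_nonsing_inv_iff] using hR))
  obtain ⟨U, μ, hμ, hspec⟩ : ∃ (U : unitaryGroup ι ℂ) (μ : ι → ℝ), (∀ i, 0 < μ i) ∧
      (R⁻¹)ᴴ * B * R⁻¹ = U * diagonal (fun i => (μ i : ℂ)) * star (U : Matrix ι ι ℂ) :=
    ⟨_, _, hM.eigenvalues_pos, hM.1.spectral_theorem⟩
  refine ⟨star (U : Matrix ι ι ℂ) * R, μ, hμ, ?_, ?_⟩
  · simp [← star_eq_conjTranspose, Matrix.mul_assoc, ← Matrix.mul_assoc _ _ R,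
      Unitary.mul_star_self_of_mem U.2]
  · calc B = Rᴴ * ((R⁻¹)ᴴ * B * R⁻¹) * R := by
          simp [← conjTranspose_mul, ← Matrix.mul_assoc, Matrix.mul_assoc B,
            nonsing_inv_mul R hRdet]
      _ = _ := by
        rw [hspec]
        simp [← star_eq_conjTranspose, Matrix.mul_assoc]

lemma re_det_conjTranspose_mul_diagonal_mul (C : Matrix ι ι ℂ) (f : ι → ℝ) :
    (Cᴴ * diagonal (fun i => (f i : ℂ)) * C).det.re = Complex.normSq C.det * ∏ i, f i := by
  rw [det_mul, det_mul, det_conjTranspose, det_diagonal, mul_right_comm, ← Complex.ofReal_prod,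
    Complex.star_def, ← Complex.normSq_eq_conj_mul_self, ← Complex.ofReal_mul, Complex.ofReal_re]

theorem strictConcaveOn_log_re_det :
    StrictConcaveOn ℝ {A : Matrix ι ι ℂ | A.PosDef} (fun A => Real.log A.det.re) := by
  refine ⟨convex_setOf_posDef, fun A hA B hB hAB a b ha hb hab => ?_⟩
  obtain ⟨C, μ, hμ, rfl, rfl⟩ := hA.exists_eq_conjTranspose_mul_diagonal_mul hB
  set D : (ι → ℝ) → Matrix ι ι ℂ := fun x => Cᴴ * diagonal (fun i => (x i : ℂ)) * C
  have hD_one : Cᴴ * C = D 1 := by simp [D]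
  have hD_add : a • D 1 + b • D μ = D (a • 1 + b • μ) := by
    have h : diagonal (fun i => (((a • 1 + b • μ) i : ℝ) : ℂ)) =
        a • diagonal (fun _ => ((1 : ℝ) : ℂ)) + b • diagonal (fun i => (μ i : ℂ)) := by
      rw [← diagonal_smul, ← diagonal_smul, diagonal_add]
      congr 1; ext i; simp [Complex.real_smul]
    simp only [D, Pi.one_apply]
    rw [h, Matrix.mul_add, Matrix.add_mul, Matrix.mul_smul, Matrix.mul_smul, Matrix.smul_mul,
      Matrix.smul_mul]
  have hc : 0 < Complex.normSq C.det := by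
    have := hA.det_pos
    rw [det_mul, det_conjTranspose, Complex.star_def, ← Complex.normSq_eq_conj_mul_self] at this
    exact_mod_cast this
  have hlog : ∀ x ∈ Set.univ.pi fun _ : ι => Set.Ioi (0 : ℝ),
      Real.log (D x).det.re = Real.log (Complex.normSq C.det) + ∑ i, Real.log (x i) := by
    intro x hx
    simp only [Set.mem_univ_pi, Set.mem_Ioi] at hx
    rw [re_det_conjTranspose_mul_diagonal_mul, Real.log_mul hc.ne'
      (prod_pos fun i _ => hx i).ne', Real.log_prod fun i _ => (hx i).ne']
  have hone : (1 : ι → ℝ) ∈ Set.univ.pi fun _ : ι => Set.Ioi (0 : ℝ) := by simp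
  have hμ' : μ ∈ Set.univ.pi fun _ : ι => Set.Ioi (0 : ℝ) := by simpa using hμ
  have hne : (1 : ι → ℝ) ≠ μ := by rintro rfl; exact hAB hD_one
  have := strictConcaveOn_sum_log.2 hone hμ' hne ha hb hab
  simp only [smul_eq_mul] at this ⊢
  rw [hD_one, hD_add, hlog _ hone, hlog _ hμ',
    hlog _ (strictConcaveOn_sum_log.1 hone hμ' ha.le hb.le hab)]
  linear_combination this + Real.log (Complex.normSq C.det) * hab

theorem strictConvexOn_neg_log_re_det_add_re_trace (Φ : Matrix ι ι ℂ) :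
    StrictConvexOn ℝ {A : Matrix ι ι ℂ | A.PosDef}
      fun A => -Real.log A.det.re + (Φ * A).trace.re := by
  refine strictConcaveOn_log_re_det.neg.add_convexOn
    ⟨convex_setOf_posDef, fun A _ B _ a b _ _ _ => ?_⟩
  simp [Matrix.mul_add, trace_add, trace_smul, Complex.real_smul]

end Matrix

namespace KroneckerGM

variable {m₁ m₂ n : ℕ}

lemma sigmaMat_apply (S : Param m₁ m₂ n) (θ : ℝ) (u v : Idx m₁ m₂) :
    sigmaMat S θ u v = S 0 u v + (1 / 2 : ℂ) * ∑ t ∈ Ioi (0 : Fin (n + 1)),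
      (Complex.exp (-((t : ℕ) * θ) * Complex.I) * S t u v +
        Complex.exp ((t : ℕ) * θ * Complex.I) * S t v u) := by
  simp [sigmaMat, Matrix.sum_apply]

lemma sigmaMat_smul (a : ℝ) (S : Param m₁ m₂ n) (θ : ℝ) :
    sigmaMat (a • S) θ = a • sigmaMat S θ := by
  ext u v
  simp only [sigmaMat_apply, Matrix.smul_apply, Pi.smul_apply, smul_eq_mul, Complex.real_smul,
    Complex.ofReal_mul, mul_sum]
  rw [mul_add, mul_sum]
  congr 1
  exact sum_congr rfl fun t _ => by ring

lemma sigmaMat_add (S T : Param m₁ m₂ n) (θ : ℝ) :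
    sigmaMat (S + T) θ = sigmaMat S θ + sigmaMat T θ := by
  ext u v
  simp only [sigmaMat_apply, Pi.add_apply, Matrix.add_apply, Complex.ofReal_add, mul_add,
    sum_add_distrib]
  ring

open Complex in
lemma cexp_mul_sigmaMat_apply (S : Param m₁ m₂ n) (s : ℕ) (θ : ℝ) (u v : Idx m₁ m₂) :
    cexp (s * θ * I) * sigmaMat S θ u v = S 0 u v * cexp ((s : ℤ) * θ * I) +
      ∑ t ∈ Ioi (0 : Fin (n + 1)), (1 / 2 * S t u v * cexp (((s : ℤ) - (t : ℕ) : ℤ) * θ * I) +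
        1 / 2 * S t v u * cexp (((s : ℤ) + (t : ℕ) : ℤ) * θ * I)) := by
  simp only [sigmaMat_apply, mul_add, mul_sum, Int.cast_sub, Int.cast_add, Int.cast_natCast,
    sub_mul, add_mul, exp_add, exp_sub, neg_mul, exp_neg]
  congr 1
  · ring
  · exact sum_congr rfl fun t _ => by ring

open Complex Real in
lemma integral_cexp_mul_sigmaMat_apply (S : Param m₁ m₂ n) (s : Fin (n + 1)) (u v : Idx m₁ m₂) :
    ∫ θ in (-π)..π, cexp ((s : ℕ) * θ * I) * sigmaMat S θ u v =
      (if s = 0 then 2 * (π : ℂ) else π) * S s u v := by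
  have hint (k : ℤ) (c : ℂ) :
      IntervalIntegrable (fun θ : ℝ => c * cexp (k * θ * I)) MeasureTheory.volume (-π) π :=
    (by fun_prop : Continuous fun θ : ℝ => c * cexp (k * θ * I)).intervalIntegrable _ _
  have hterm : ∀ t ∈ Ioi (0 : Fin (n + 1)),
      1 / 2 * (S t u v : ℂ) * (if ((s : ℕ) : ℤ) - (t : ℕ) = 0 then 2 * (π : ℂ) else 0) +
        1 / 2 * (S t v u : ℂ) * (if ((s : ℕ) : ℤ) + (t : ℕ) = 0 then 2 * (π : ℂ) else 0) =
      if t = s then π * (S s u v : ℂ) else 0 := by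
    intro t ht
    have ht : 0 < (t : ℕ) := Fin.pos_iff_ne_zero.mpr (ne_of_gt (mem_Ioi.mp ht))
    by_cases hts : t = s
    · subst hts
      rw [sub_self, if_pos rfl, if_neg (by omega), if_pos rfl]; ring
    · have : (t : ℕ) ≠ s := fun h => hts (Fin.ext h)
      rw [if_neg (by omega), if_neg (by omega), if_neg hts]; ring
  simp_rw [cexp_mul_sigmaMat_apply]
  rw [intervalIntegral.integral_add (hint _ _)
      ((continuous_finsetSum _ fun t _ => by fun_prop).intervalIntegrable _ _),
    intervalIntegral.integral_finsetSum fun t _ => (hint _ _).add (hint _ _)]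
  simp_rw [intervalIntegral.integral_add (hint _ _) (hint _ _),
    intervalIntegral.integral_const_mul, integral_cexp_int_mul]
  rw [sum_congr rfl hterm, sum_ite_eq']
  rcases eq_or_ne s 0 with rfl | hs
  · simp only [Fin.val_zero, Nat.cast_zero, if_true, mem_Ioi, lt_self_iff_false, if_false,
      add_zero]
    ring
  · simp [hs]

def sigmaLin (θ : ℝ) : Param m₁ m₂ n →ₗ[ℝ] Matrix (Idx m₁ m₂) (Idx m₁ m₂) ℂ where
  toFun S := sigmaMat S θ
  map_add' S T := sigmaMat_add S T θ
  map_smul' a S := sigmaMat_smul a S θ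

open Real in
lemma eq_of_forall_sigmaMat_eq {S T : Param m₁ m₂ n}
    (h : ∀ θ ∈ Set.Icc (-π) π, sigmaMat S θ = sigmaMat T θ) : S = T := by
  funext s
  ext u v
  have hI : Set.uIcc (-π) π = Set.Icc (-π) π := Set.uIcc_of_le (by linarith [pi_pos])
  have hST := integral_cexp_mul_sigmaMat_apply S s u v
  rw [intervalIntegral.integral_congr fun θ hθ => by rw [h θ (hI ▸ hθ)],
    integral_cexp_mul_sigmaMat_apply] at hST
  have hc : (if s = 0 then 2 * (π : ℂ) else π) ≠ 0 := by
    split_ifs <;> simp [pi_ne_zero]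
  exact_mod_cast (mul_left_cancel₀ hc hST).symm

lemma continuous_sigmaMat (S : Param m₁ m₂ n) : Continuous (sigmaMat S) := by
  unfold sigmaMat; fun_prop

lemma continuous_PhiP (N : ℕ) (y : ℕ → Idx m₁ m₂ → ℝ) : Continuous (PhiP m₁ m₂ n N y) := by
  unfold PhiP; fun_prop

lemma convex_Qplus : Convex ℝ (Qplus m₁ m₂ n) := by
  intro S hS T hT a b ha hb hab
  refine ⟨by simp [hS.1, hT.1], fun θ hθ => ?_⟩
  simpa only [sigmaMat_add, sigmaMat_smul, Set.mem_ofPred_eq] using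
    Matrix.convex_setOf_posDef (hS.2 θ hθ) (hT.2 θ hθ) ha hb hab

open Real in
lemma strictConvexOn_ell {N : ℕ} (hN : n < N) (y : ℕ → Idx m₁ m₂ → ℝ) :
    StrictConvexOn ℝ (Qplus m₁ m₂ n) (ell m₁ m₂ n N y) := by
  have hc : 0 < ((N : ℝ) - n) / (4 * π) :=
    div_pos (sub_pos.mpr (by exact_mod_cast hN)) (by positivity)
  refine StrictConvexOn.const_mul hc (strictConvexOn_intervalIntegral_comp (L := sigmaLin)
    (by linarith [pi_pos]) convex_Qplus
    (fun θ _ => Matrix.strictConvexOn_neg_log_re_det_add_re_trace (PhiP m₁ m₂ n N y θ))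
    (fun S hS θ hθ => hS.2 θ hθ) (fun S _ T _ h => eq_of_forall_sigmaMat_eq h) fun S hS => ?_)
  refine ContinuousOn.add (ContinuousOn.neg (ContinuousOn.log ?_ fun θ hθ => ?_)) ?_
  · exact (Complex.continuous_re.comp (continuous_sigmaMat S).matrix_det).continuousOn
  · exact (Complex.pos_iff.mp (hS.2 θ hθ).det_pos).1.ne'
  · exact (Complex.continuous_re.comp
      ((continuous_PhiP N y).matrix_mul (continuous_sigmaMat S)).matrix_trace).continuousOn

lemma convexOn_qfun (h j : Fin m₁) (k l : Fin m₂) :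
    ConvexOn ℝ Set.univ fun S : Param m₁ m₂ n => qfun S h j k l := by
  have habs : ∀ p q, ConvexOn ℝ Set.univ fun S : Param m₁ m₂ n =>
      univ.sup' univ_nonempty fun t => |S t p q| := fun p q =>
    ConvexOn.finset_sup' _ convex_univ fun t _ => ⟨convex_univ, fun S _ T _ a b ha hb _ => by
      simpa [abs_mul, abs_of_nonneg ha, abs_of_nonneg hb] using
        abs_add_le (a * S t p q) (b * T t p q)⟩
  exact ((habs _ _).sup (habs _ _)).sup ((habs _ _).sup (habs _ _))

lemma convexOn_gpen {Λ : Matrix (Fin m₁) (Fin m₁) ℝ} (hΛ : ∀ h j, 0 ≤ Λ h j)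
    (Γ : Matrix (Fin m₂) (Fin m₂) ℝ) : ConvexOn ℝ Set.univ (gpen (n := n) Λ Γ) :=
  ConvexOn.sum convex_univ fun p _ =>
    (convexOn_qfun _ _ _ _).smul (le_max_of_le_left (hΛ p.1 p.2.2.1))

theorem regularized_ML_objective_strictConvexOn_general
    (m₁ m₂ n N : ℕ) (hN : n < N)
    (y : ℕ → Idx m₁ m₂ → ℝ)
    (Λ : Matrix (Fin m₁) (Fin m₁) ℝ) (hΛ : ∀ h j, 0 ≤ Λ h j)
    (Γ : Matrix (Fin m₂) (Fin m₂) ℝ) :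
    StrictConvexOn ℝ (Qplus m₁ m₂ n)
      (fun S => ell m₁ m₂ n N y S + gpen Λ Γ S) :=
  (strictConvexOn_ell hN y).add_convexOn
    ((convexOn_gpen hΛ Γ).subset (Set.subset_univ _) convex_Qplus)

/-- for any fixed nonnegative symmetric weight matrices `Λ`, `Γ`, the
objective `S ↦ ℓ(y^N; S) + g(S; Λ, Γ)` of the regularized maximum-likelihood problem
is strictly convex on the convex set `Q⁺`. -/
theorem regularized_ML_objective_strictConvexOn
    (m₁ m₂ n N : ℕ) (hm₁ : 1 ≤ m₁) (hm₂ : 1 ≤ m₂) (hn : 1 ≤ n) (hN : n < N)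
    (y : ℕ → Idx m₁ m₂ → ℝ)
    (Λ : Matrix (Fin m₁) (Fin m₁) ℝ) (hΛsym : Λᵀ = Λ) (hΛ : ∀ h j, 0 ≤ Λ h j)
    (Γ : Matrix (Fin m₂) (Fin m₂) ℝ) (hΓsym : Γᵀ = Γ) (hΓ : ∀ k l, 0 ≤ Γ k l) :
    StrictConvexOn ℝ (Qplus m₁ m₂ n)
      (fun S => ell m₁ m₂ n N y S + gpen Λ Γ S) :=
  regularized_ML_objective_strictConvexOn_general m₁ m₂ n N hN y Λ hΛ Γ

end KroneckerGM
end
end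

section
/- Let P be a nonempty finite index set, ε > 0, and for each i ∈ P let γ_i ≥ 0, q_i ≥ 0 and α_i > 0 be given. Let γ̃_1 < γ̃_2 < ... < γ̃_ũ be the distinct values among {γ_i : i ∈ P}, and for u = 1,...,ũ set C_u = {i ∈ P : γ_i ≤ γ̃_u} and λ̃_u = (Σ_{i∈C_u} α_i) / (Σ_{i∈C_u} q_i + ε), with λ̃_0 = 0. Consider f(λ) = Σ_{i∈P} [ max{λ, γ_i}·q_i − α_i·log max{λ, γ_i} ] + ε·λ on the domain D = {λ ≥ 0 : max{λ, γ_i} > 0 for all i ∈ P}. Then f attains its minimum over D, and every minimizer of f over D belongs to the finite set M₁ = {γ̃_1, ..., γ̃_ũ} ∪ {λ̃_0, λ̃_1, ..., λ̃_ũ} (intersected with D). -/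
/-!
On every closed interval between consecutive values of `γ` the objective has the form
`c λ - A log λ + const` with `c = ∑ qᵢ + ε > 0` and `A = ∑ αᵢ ≥ 0` taken over the `i` with
`γᵢ` below the interval. Such a function strictly decreases towards its stationary point
`A / c`, so projecting that point onto the interval strictly lowers the objective at any
point of `D` outside the finite set `M₁`. Hence every point of `D` is beaten or matched by a
point of the finite set `D ∩ M₁`, whose best element is a global minimizer.
-/

open Finset

theorem mul_sub_mul_log_lt_of_mem_uIcc {c A x y : ℝ} (hc : 0 < c) (hA : 0 ≤ A) (hx : 0 < x)
    (hy : y ∈ Set.uIcc x (A / c)) (hne : y ≠ x) :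
    c * y - A * Real.log y < c * x - A * Real.log x := by
  rcases hA.eq_or_lt with rfl | hA
  · have hyx : y < x := by
      rw [zero_div, Set.mem_uIcc] at hy
      rcases hy with ⟨hxy, hy0⟩ | ⟨-, hyx⟩
      · linarith
      · exact lt_of_le_of_ne hyx hne
    simp only [zero_mul, sub_zero]
    exact mul_lt_mul_of_pos_left hyx hc
  have hs : 0 < A / c := div_pos hA hc
  have hbetween : (x - y) * (A / c - y) ≤ 0 := by
    rcases Set.mem_uIcc.1 hy with ⟨h₁, h₂⟩ | ⟨h₁, h₂⟩ <;> nlinarith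
  have hy0 : 0 < y := by
    rcases Set.mem_uIcc.1 hy with ⟨h₁, -⟩ | ⟨h₁, -⟩ <;> linarith
  have hlog : Real.log x - Real.log y < x / y - 1 := by
    rw [← Real.log_div hx.ne' hy0.ne']
    refine Real.log_lt_sub_one_of_pos (div_pos hx hy0) ?_
    rwa [ne_eq, div_eq_one_iff_eq hy0.ne', eq_comm]
  have hlin : A * (x / y - 1) ≤ c * (x - y) := by
    have hdiff : A * (x / y - 1) - c * (x - y) = c * ((x - y) * (A / c - y)) / y := by
      field_simp
    have hnonpos : c * ((x - y) * (A / c - y)) / y ≤ 0 :=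
      div_nonpos_of_nonpos_of_nonneg (mul_nonpos_of_nonneg_of_nonpos hc.le hbetween) hy0.le
    linarith
  linarith [mul_lt_mul_of_pos_left hlog hA]

theorem exists_mem_uIcc_in_cell_closure {ι : Type*} [Fintype ι] (γ : ι → ℝ) (μ s : ℝ) :
    ∃ ν ∈ Set.uIcc μ s, (ν = s ∨ ν ∈ Set.range γ) ∧
      (∀ i, γ i < μ → γ i ≤ ν) ∧ (∀ i, μ ≤ γ i → ν ≤ γ i) := by
  rcases le_or_gt s μ with hsμ | hμs
  · set T := insert s ((univ.filter fun i => γ i < μ).image γ)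
    have hle : T.max' (insert_nonempty _ _) ≤ μ := by
      refine max'_le _ _ _ fun t ht => ?_
      rcases mem_insert.1 ht with rfl | ht
      · exact hsμ
      · obtain ⟨i, hi, rfl⟩ := mem_image.1 ht
        exact (mem_filter.1 hi).2.le
    refine ⟨T.max' (insert_nonempty _ _),
      Set.mem_uIcc.2 (Or.inr ⟨le_max' _ _ (mem_insert_self _ _), hle⟩), ?_,
      fun i hi => le_max' _ _ (mem_insert_of_mem (mem_image_of_mem _ (by simpa using hi))),
      fun i hi => hle.trans hi⟩
    rcases mem_insert.1 (max'_mem T _) with h | h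
    · exact Or.inl h
    · obtain ⟨i, -, hi⟩ := mem_image.1 h
      exact Or.inr ⟨i, hi⟩
  · set T := insert s ((univ.filter fun i => μ ≤ γ i).image γ)
    have hge : μ ≤ T.min' (insert_nonempty _ _) := by
      refine le_min' _ _ _ fun t ht => ?_
      rcases mem_insert.1 ht with rfl | ht
      · exact hμs.le
      · obtain ⟨i, hi, rfl⟩ := mem_image.1 ht
        exact (mem_filter.1 hi).2
    refine ⟨T.min' (insert_nonempty _ _),
      Set.mem_uIcc.2 (Or.inl ⟨hge, min'_le _ _ (mem_insert_self _ _)⟩), ?_,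
      fun i hi => hi.le.trans hge,
      fun i hi => min'_le _ _ (mem_insert_of_mem (mem_image_of_mem _ (by simpa using hi)))⟩
    rcases mem_insert.1 (min'_mem T _) with h | h
    · exact Or.inl h
    · obtain ⟨i, -, hi⟩ := mem_image.1 h
      exact Or.inr ⟨i, hi⟩

theorem exists_filter_lt_eq_filter_le {ι : Type*} [Fintype ι] {γ : ι → ℝ} {μ : ℝ}
    (h : (univ.filter fun i => γ i < μ).Nonempty) :
    ∃ j, (univ.filter fun i => γ i < μ) = univ.filter fun i => γ i ≤ γ j := by
  obtain ⟨j, hj, hmax⟩ := exists_max_image _ γ h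
  refine ⟨j, Finset.ext fun i => ?_⟩
  simp only [mem_filter, mem_univ, true_and] at hj hmax ⊢
  exact ⟨hmax i, fun hi => hi.trans_lt hj⟩

theorem exists_min_and_minimizers_mem_of_forall_exists_lt {α β : Type*} [LinearOrder β]
    {f : α → β} {D M : Set α} (hM : M.Finite) (hD : D.Nonempty)
    (h : ∀ μ ∈ D, μ ∉ M → ∃ ν ∈ D ∩ M, f ν < f μ) :
    (∃ lam ∈ D, ∀ μ ∈ D, f lam ≤ f μ) ∧ ∀ lam ∈ D, (∀ μ ∈ D, f lam ≤ f μ) → lam ∈ M := by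
  have hDM : (D ∩ M).Nonempty := by
    obtain ⟨μ, hμ⟩ := hD
    by_cases hμM : μ ∈ M
    · exact ⟨μ, hμ, hμM⟩
    · obtain ⟨ν, hν, -⟩ := h μ hμ hμM
      exact ⟨ν, hν⟩
  obtain ⟨lam, hlam, hmin⟩ := Set.exists_min_image _ f (hM.inter_of_right D) hDM
  refine ⟨⟨lam, hlam.1, fun μ hμ => ?_⟩, fun lam hlam hmin => ?_⟩
  · by_cases hμM : μ ∈ M
    · exact hmin μ ⟨hμ, hμM⟩
    · obtain ⟨ν, hν, hlt⟩ := h μ hμ hμM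
      exact (hmin ν hν).trans hlt.le
  · by_contra hM
    obtain ⟨ν, hν, hlt⟩ := h lam hlam hM
    exact (hmin ν hν.1).not_gt hlt

namespace MaxPrior

variable {ι : Type*} [Fintype ι] (γ q α : ι → ℝ) (ε : ℝ)

noncomputable def objective (lam : ℝ) : ℝ :=
  (∑ i, (max lam (γ i) * q i - α i * Real.log (max lam (γ i)))) + ε * lam

def domain : Set ℝ := {lam | 0 ≤ lam ∧ ∀ i, 0 < max lam (γ i)}

noncomputable def stationaryPoint (S : Finset ι) : ℝ :=
  (∑ i ∈ S, α i) / ((∑ i ∈ S, q i) + ε)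

def candidates : Set ℝ :=
  Set.range γ ∪ {0} ∪
    Set.range fun j => stationaryPoint q α ε (univ.filter fun i => γ i ≤ γ j)

theorem objective_eq_of_cell [DecidableEq ι] (S : Finset ι) {lam : ℝ}
    (h₁ : ∀ i ∈ S, γ i ≤ lam) (h₂ : ∀ i ∉ S, lam ≤ γ i) :
    objective γ q α ε lam = ((∑ i ∈ S, q i) + ε) * lam - (∑ i ∈ S, α i) * Real.log lam +
      ∑ i ∈ Sᶜ, (γ i * q i - α i * Real.log (γ i)) := by
  have hS : ∑ i ∈ S, (max lam (γ i) * q i - α i * Real.log (max lam (γ i))) =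
      ∑ i ∈ S, (lam * q i - α i * Real.log lam) :=
    sum_congr rfl fun i hi => by rw [max_eq_left (h₁ i hi)]
  have hSc : ∑ i ∈ Sᶜ, (max lam (γ i) * q i - α i * Real.log (max lam (γ i))) =
      ∑ i ∈ Sᶜ, (γ i * q i - α i * Real.log (γ i)) :=
    sum_congr rfl fun i hi => by rw [max_eq_right (h₂ i (mem_compl.1 hi))]
  rw [objective, ← sum_add_sum_compl S, hS, hSc, sum_sub_distrib, ← mul_sum, ← sum_mul]
  ring

variable {γ q α ε}

theorem objective_lt_of_cell [DecidableEq ι] (hε : 0 < ε) (hq : ∀ i, 0 ≤ q i)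
    (hα : ∀ i, 0 ≤ α i) (S : Finset ι) {μ ν : ℝ} (hμ : 0 < μ)
    (hμS : ∀ i ∈ S, γ i ≤ μ) (hμSc : ∀ i ∉ S, μ ≤ γ i)
    (hνS : ∀ i ∈ S, γ i ≤ ν) (hνSc : ∀ i ∉ S, ν ≤ γ i)
    (hν : ν ∈ Set.uIcc μ (stationaryPoint q α ε S)) (hne : ν ≠ μ) :
    objective γ q α ε ν < objective γ q α ε μ := by
  rw [objective_eq_of_cell γ q α ε S hμS hμSc, objective_eq_of_cell γ q α ε S hνS hνSc]
  have hc : 0 < (∑ i ∈ S, q i) + ε := by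
    have := sum_nonneg fun i (_ : i ∈ S) => hq i
    linarith
  have := mul_sub_mul_log_lt_of_mem_uIcc hc (sum_nonneg fun i _ => hα i) hμ hν hne
  linarith

theorem exists_objective_lt (hε : 0 < ε) (hq : ∀ i, 0 ≤ q i) (hα : ∀ i, 0 < α i) {μ : ℝ}
    (hμD : μ ∈ domain γ) (hμM : μ ∉ candidates γ q α ε) :
    ∃ ν ∈ domain γ ∩ candidates γ q α ε, objective γ q α ε ν < objective γ q α ε μ := by
  classical
  set S := univ.filter fun i => γ i < μ
  have hmemS : ∀ i, i ∈ S ↔ γ i < μ := by simp [S]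
  set s := stationaryPoint q α ε S
  have hμ : 0 < μ := lt_of_le_of_ne hμD.1 fun h => hμM (Or.inl (Or.inr h.symm))
  have hs : 0 ≤ s := div_nonneg (sum_nonneg fun i _ => (hα i).le)
    (add_nonneg (sum_nonneg fun i _ => hq i) hε.le)
  have hsM : s ∈ candidates γ q α ε := by
    rcases S.eq_empty_or_nonempty with hS | hS
    · refine Or.inl (Or.inr ?_)
      simp [s, stationaryPoint, hS]
    · obtain ⟨j, hj⟩ := exists_filter_lt_eq_filter_le hS
      exact Or.inr ⟨j, congrArg (stationaryPoint q α ε) hj.symm⟩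
  obtain ⟨ν, hν, hνM, hνlo, hνhi⟩ := exists_mem_uIcc_in_cell_closure γ μ s
  have hνM : ν ∈ candidates γ q α ε := hνM.elim (fun h => h ▸ hsM) fun h => Or.inl (Or.inl h)
  have hνpos : ∀ i, γ i < μ → 0 < ν := by
    intro i hi
    have hA : 0 < ∑ i ∈ S, α i :=
      (hα i).trans_le (single_le_sum (fun i _ => (hα i).le) ((hmemS i).2 hi))
    have hs_pos : 0 < s := div_pos hA (add_pos_of_nonneg_of_pos (sum_nonneg fun i _ => hq i) hε)
    rcases Set.mem_uIcc.1 hν with ⟨h, -⟩ | ⟨h, -⟩ <;> linarith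
  have hνD : ν ∈ domain γ := by
    refine ⟨?_, fun i => ?_⟩
    · rcases Set.mem_uIcc.1 hν with ⟨h, -⟩ | ⟨h, -⟩ <;> linarith
    · rcases lt_or_ge (γ i) μ with hi | hi
      · exact lt_max_of_lt_left (hνpos i hi)
      · exact lt_max_of_lt_right (hμ.trans_le hi)
  refine ⟨ν, ⟨hνD, hνM⟩,
    objective_lt_of_cell hε hq (fun i => (hα i).le) S hμ (fun i hi => ((hmemS i).1 hi).le)
      (fun i hi => not_lt.1 ((hmemS i).not.1 hi)) (fun i hi => hνlo i ((hmemS i).1 hi))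
      (fun i hi => hνhi i (not_lt.1 ((hmemS i).not.1 hi))) hν fun h => hμM (h ▸ hνM)⟩

theorem candidates_finite : (candidates γ q α ε).Finite :=
  ((Set.finite_range γ).union (Set.finite_singleton 0)).union (Set.finite_range _)

end MaxPrior

theorem max_prior_lambda_update_minimizers_general
    (ι : Type) [Fintype ι] (ε : ℝ) (hε : 0 < ε)
    (γ q α : ι → ℝ) (hq : ∀ i, 0 ≤ q i) (hα : ∀ i, 0 < α i) :
    let f : ℝ → ℝ := fun lam =>
      (∑ i : ι, (max lam (γ i) * q i - α i * Real.log (max lam (γ i)))) + ε * lam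
    let D : Set ℝ := {lam | 0 ≤ lam ∧ ∀ i : ι, 0 < max lam (γ i)}
    let M : Set ℝ := Set.range γ ∪ {0} ∪
      Set.range (fun j : ι =>
        (∑ i ∈ Finset.univ.filter fun i => γ i ≤ γ j, α i) /
          ((∑ i ∈ Finset.univ.filter fun i => γ i ≤ γ j, q i) + ε))
    (∃ lam ∈ D, ∀ μ ∈ D, f lam ≤ f μ) ∧
      ∀ lam ∈ D, (∀ μ ∈ D, f lam ≤ f μ) → lam ∈ M := by
  have hD : (MaxPrior.domain γ).Nonempty :=
    ⟨1, zero_le_one, fun _ => lt_max_of_lt_left one_pos⟩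
  exact exists_min_and_minimizers_mem_of_forall_exists_lt MaxPrior.candidates_finite hD
    fun μ hμ hμM => MaxPrior.exists_objective_lt hε hq hα hμ hμM

/-- The hyperparameter update step for the weights `λ` in the generalized
maximum-likelihood scheme with the max prior: the function
`f(λ) = ∑ᵢ [max{λ, γᵢ} qᵢ − αᵢ log max{λ, γᵢ}] + ε λ` attains its minimum over
`D = {λ ≥ 0 : max{λ, γᵢ} > 0 ∀ i}`, and every minimizer belongs to the finite set
`M₁` consisting of the values `γᵢ`, of `0`, and of the candidate stationary points
`(∑_{i : γᵢ ≤ γⱼ} αᵢ) / (∑_{i : γᵢ ≤ γⱼ} qᵢ + ε)`. -/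
theorem max_prior_lambda_update_minimizers
    (ι : Type) [Fintype ι] [Nonempty ι] (ε : ℝ) (hε : 0 < ε)
    (γ q α : ι → ℝ) (hγ : ∀ i, 0 ≤ γ i) (hq : ∀ i, 0 ≤ q i) (hα : ∀ i, 0 < α i) :
    let f : ℝ → ℝ := fun lam =>
      (∑ i : ι, (max lam (γ i) * q i - α i * Real.log (max lam (γ i)))) + ε * lam
    let D : Set ℝ := {lam | 0 ≤ lam ∧ ∀ i : ι, 0 < max lam (γ i)}
    let M : Set ℝ := Set.range γ ∪ {0} ∪
      Set.range (fun j : ι =>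
        (∑ i ∈ Finset.univ.filter fun i => γ i ≤ γ j, α i) /
          ((∑ i ∈ Finset.univ.filter fun i => γ i ≤ γ j, q i) + ε))
    (∃ lam ∈ D, ∀ μ ∈ D, f lam ≤ f μ) ∧
      ∀ lam ∈ D, (∀ μ ∈ D, f lam ≤ f μ) → lam ∈ M :=
  max_prior_lambda_update_minimizers_general ι ε hε γ q α hq hα
end

section
/- Let X, Y, Z be topological spaces and f : X × Y × Z → ℝ a continuous function. Suppose the sequences (x_r) in X, (y_r) in Y, (z_r) in Z satisfy, for every r: f(x_{r+1}, y_r, z_r) ≤ f(x, y_r, z_r) for all x ∈ X; f(x_{r+1}, y_{r+1}, z_r) ≤ f(x_{r+1}, y, z_r) for all y ∈ Y; and f(x_{r+1}, y_{r+1}, z_{r+1}) ≤ f(x_{r+1}, y_{r+1}, z) for all z ∈ Z. If the sequence (x_r, y_r, z_r) converges to a point (x̄, ȳ, z̄), then (x̄, ȳ, z̄) is a coordinatewise minimum point of f, i.e. f(x̄, ȳ, z̄) ≤ f(x, ȳ, z̄) for all x ∈ X, f(x̄, ȳ, z̄) ≤ f(x̄, y, z̄) for all y ∈ Y, and f(x̄,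 ȳ, z̄) ≤ f(x̄, ȳ, z) for all z ∈ Z. -/
/-- A limit point of a three-step exact block-coordinate minimization scheme for a
continuous function `f : X × Y × Z → ℝ` is a coordinatewise minimum point of `f`. -/
theorem limit_of_block_coordinate_descent_is_coordinatewise_min
    {X Y Z : Type*} [TopologicalSpace X] [TopologicalSpace Y] [TopologicalSpace Z]
    (f : X → Y → Z → ℝ)
    (hf : Continuous fun p : X × Y × Z => f p.1 p.2.1 p.2.2)
    (x : ℕ → X) (y : ℕ → Y) (z : ℕ → Z)
    (h1 : ∀ r, ∀ x' : X, f (x (r + 1)) (y r) (z r) ≤ f x' (y r) (z r))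
    (h2 : ∀ r, ∀ y' : Y, f (x (r + 1)) (y (r + 1)) (z r) ≤ f (x (r + 1)) y' (z r))
    (h3 : ∀ r, ∀ z' : Z, f (x (r + 1)) (y (r + 1)) (z (r + 1)) ≤ f (x (r + 1)) (y (r + 1)) z')
    (xb : X) (yb : Y) (zb : Z)
    (hconv : Filter.Tendsto (fun r => (x r, y r, z r)) Filter.atTop (nhds (xb, yb, zb))) :
    (∀ x' : X, f xb yb zb ≤ f x' yb zb) ∧
      (∀ y' : Y, f xb yb zb ≤ f xb y' zb) ∧
      (∀ z' : Z, f xb yb zb ≤ f xb yb z') := by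
  have hx : Filter.Tendsto x Filter.atTop (nhds xb) :=
    (continuous_fst.tendsto _).comp hconv
  have hy : Filter.Tendsto y Filter.atTop (nhds yb) :=
    ((continuous_fst.comp continuous_snd).tendsto _).comp hconv
  have hz : Filter.Tendsto z Filter.atTop (nhds zb) :=
    ((continuous_snd.comp continuous_snd).tendsto _).comp hconv
  have hshift : Filter.Tendsto (fun r : ℕ => r + 1) Filter.atTop Filter.atTop :=
    Filter.tendsto_add_atTop_nat 1
  have hx1 : Filter.Tendsto (fun r => x (r + 1)) Filter.atTop (nhds xb) := hx.comp hshift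
  have hy1 : Filter.Tendsto (fun r => y (r + 1)) Filter.atTop (nhds yb) := hy.comp hshift
  have hz1 : Filter.Tendsto (fun r => z (r + 1)) Filter.atTop (nhds zb) := hz.comp hshift
  have key : ∀ (a : ℕ → X) (b : ℕ → Y) (c : ℕ → Z) (xa : X) (ya : Y) (za : Z),
      Filter.Tendsto a Filter.atTop (nhds xa) →
      Filter.Tendsto b Filter.atTop (nhds ya) →
      Filter.Tendsto c Filter.atTop (nhds za) →
      Filter.Tendsto (fun r => f (a r) (b r) (c r)) Filter.atTop (nhds (f xa ya za)) := by
    intro a b c xa ya za ha hb hc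
    exact (hf.tendsto _).comp (ha.prodMk_nhds (hb.prodMk_nhds hc))
  refine ⟨fun x' => ?_, fun y' => ?_, fun z' => ?_⟩
  · exact le_of_tendsto_of_tendsto' (key _ _ _ _ _ _ hx1 hy hz)
      (key _ _ _ _ _ _ tendsto_const_nhds hy hz) (fun r => h1 r x')
  · exact le_of_tendsto_of_tendsto' (key _ _ _ _ _ _ hx1 hy1 hz)
      (key _ _ _ _ _ _ hx1 tendsto_const_nhds hz) (fun r => h2 r y')
  · exact le_of_tendsto_of_tendsto' (key _ _ _ _ _ _ hx1 hy1 hz1)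
      (key _ _ _ _ _ _ hx1 hy1 tendsto_const_nhds) (fun r => h3 r z')
end
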